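/- arXiv:1506.03399 — 2 statements merged into one kernel-verified Lean document; each statement's English description precedes it below -/
import Mathlib

section
/- Suppose τ : ℍ → ℝ is Lipschitz in the Euclidean coordinates (θ,ρ) with Lipschitz constant L, ψ ∈ C_c^∞(ℍ), and ∫_ℍ ψ(q^{-1}) dV(q) = 1. Then there exists a constant C (depending on ψ and L) such that |(τ∗ψ)(θ,ρ) − τ(θ,ρ)| ≤ Cρ for all (θ,ρ) ∈ ℍ. In particular τ∗ψ − τ = O(ρ) as ρ → 0. -/
open MeasureTheory

/-- The upper half-space, as a subset of `ℝⁿ × ℝ`. -/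
def upperHalf (n : ℕ) : Set ((Fin n → ℝ) × ℝ) := {p | 0 < p.2}

/-- Group convolution on the half-space group:
`(τ∗ψ)(θ,ρ) = ∫_ℍ τ(θ+ρx, ρy) ψ(−x/y, 1/y) y^{−(n+1)} dx dy`. -/
noncomputable def groupConv {n : ℕ} (τ ψ : (Fin n → ℝ) × ℝ → ℝ)
    (q : (Fin n → ℝ) × ℝ) : ℝ :=
  ∫ p in upperHalf n,
    τ (q.1 + q.2 • p.1, q.2 * p.2) * ψ (-(p.2⁻¹ • p.1), p.2⁻¹) * (p.2 ^ (n + 1))⁻¹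

/-- If `τ : ℍ → ℝ` is Lipschitz in the Euclidean coordinates `(θ,ρ)` with
Lipschitz constant `L`, `ψ ∈ C_c^∞(ℍ)`, and `∫_ℍ ψ(q⁻¹) dV(q) = 1`, then there is a
constant `C` with `|(τ∗ψ)(θ,ρ) − τ(θ,ρ)| ≤ Cρ` on `ℍ`; in particular
`τ∗ψ − τ = O(ρ)` as `ρ → 0`. -/
theorem groupConv_approx {n : ℕ} (L : NNReal) (τ ψ : (Fin n → ℝ) × ℝ → ℝ)
    (hτ : LipschitzOnWith L τ (upperHalf n))
    (hψ : ContDiff ℝ (⊤ : ℕ∞) ψ) (hψc : HasCompactSupport ψ)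
    (hψsupp : tsupport ψ ⊆ upperHalf n)
    (hψnorm : ∫ p in upperHalf n, ψ (-(p.2⁻¹ • p.1), p.2⁻¹) * (p.2 ^ (n + 1))⁻¹ = 1) :
    ∃ C : ℝ, ∀ (θ : Fin n → ℝ) (ρ : ℝ), 0 < ρ →
      |groupConv τ ψ (θ, ρ) - τ (θ, ρ)| ≤ C * ρ := by
  classical
  have hHmeas : MeasurableSet (upperHalf n) :=
    measurableSet_lt measurable_const measurable_snd
  set ι : (Fin n → ℝ) × ℝ → (Fin n → ℝ) × ℝ := fun p => (-(p.2⁻¹ • p.1), p.2⁻¹) with hιdef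
  set g : (Fin n → ℝ) × ℝ → ℝ := fun p => ψ (ι p) * (p.2 ^ (n + 1))⁻¹ with hgdef
  -- integrability of g on upperHalf
  have hgInt : IntegrableOn g (upperHalf n) := by
    by_contra h
    rw [integral_undef h] at hψnorm
    exact one_ne_zero hψnorm.symm
  -- g is measurable
  have hgm : Measurable g := by
    apply Measurable.mul
    · exact hψ.continuous.measurable.comp
        (((measurable_snd.inv.smul measurable_fst).neg).prodMk measurable_snd.inv)
    · exact ((measurable_snd.pow_const _).inv)
  -- compact set containing the support of g
  have hιcont : ContinuousOn ι (upperHalf n) := by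
    have hic : ContinuousOn (fun p : (Fin n → ℝ) × ℝ => p.2⁻¹) (upperHalf n) :=
      continuous_snd.continuousOn.inv₀ fun p hp => ne_of_gt hp
    exact ((hic.smul continuous_fst.continuousOn).neg).prodMk hic
  have hK' : IsCompact (ι '' tsupport ψ) :=
    hψc.image_of_continuousOn (hιcont.mono hψsupp)
  have hmem : ∀ p, g p ≠ 0 → p ∈ ι '' tsupport ψ := by
    intro p hp
    have h1 : ψ (ι p) ≠ 0 := fun h => hp (by simp [hgdef, h])
    have h2 : ι p ∈ tsupport ψ := subset_tsupport ψ h1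
    have h3 : (0:ℝ) < p.2⁻¹ := hψsupp h2
    have h4 : (0:ℝ) < p.2 := inv_pos.mp h3
    refine ⟨ι p, h2, ?_⟩
    show (-((p.2⁻¹)⁻¹ • (-(p.2⁻¹ • p.1))), (p.2⁻¹)⁻¹) = p
    rw [inv_inv, smul_neg, neg_neg, smul_smul, mul_inv_cancel₀ h4.ne', one_smul]
  -- bound on the compact set
  obtain ⟨M0, hM0⟩ := hK'.exists_bound_of_continuousOn
      (f := fun p => ‖p.1‖ + |p.2 - 1|)
      ((continuous_fst.norm.add (continuous_snd.sub continuous_const).abs).continuousOn)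
  set M : ℝ := max M0 0 with hMdef
  have hMnn : 0 ≤ M := le_max_right _ _
  have hMb : ∀ p ∈ ι '' tsupport ψ, ‖p.1‖ + |p.2 - 1| ≤ M := by
    intro p hp
    calc ‖p.1‖ + |p.2 - 1| ≤ ‖‖p.1‖ + |p.2 - 1|‖ := le_abs_self _
      _ ≤ M0 := hM0 p hp
      _ ≤ M := le_max_left _ _
  refine ⟨(L : ℝ) * M * (∫ p in upperHalf n, |g p|), fun θ ρ hρ => ?_⟩
  set F : (Fin n → ℝ) × ℝ → ℝ :=
    fun p => (τ (θ + ρ • p.1, ρ * p.2) - τ (θ, ρ)) * g p with hFdef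
  have hθρ : ((θ, ρ) : (Fin n → ℝ) × ℝ) ∈ upperHalf n := hρ
  have hmaps : ∀ p ∈ upperHalf n,
      ((θ + ρ • p.1, ρ * p.2) : (Fin n → ℝ) × ℝ) ∈ upperHalf n :=
    fun p hp => mul_pos hρ hp
  -- pointwise bound on upperHalf
  have hbound : ∀ p ∈ upperHalf n, |F p| ≤ ((L : ℝ) * M * ρ) * |g p| := by
    intro p hp
    rcases eq_or_ne (g p) 0 with h | h
    · simp [hFdef, h]
    · have hpK := hmem p h
      have hM := hMb p hpK
      have hn1 : (0:ℝ) ≤ ‖p.1‖ := norm_nonneg _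
      have hn2 : (0:ℝ) ≤ |p.2 - 1| := abs_nonneg _
      have hdist : dist ((θ + ρ • p.1, ρ * p.2) : (Fin n → ℝ) × ℝ) (θ, ρ) ≤ ρ * M := by
        rw [Prod.dist_eq]
        apply max_le
        · rw [dist_self_add_left, norm_smul, Real.norm_eq_abs, abs_of_pos hρ]
          nlinarith
        · rw [Real.dist_eq]
          have : ρ * p.2 - ρ = ρ * (p.2 - 1) := by ring
          rw [this, abs_mul, abs_of_pos hρ]
          nlinarith
      have hlip := hτ.dist_le_mul _ (hmaps p hp) _ hθρ
      rw [Real.dist_eq] at hlip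
      have hτb : |τ (θ + ρ • p.1, ρ * p.2) - τ (θ, ρ)| ≤ (L : ℝ) * (ρ * M) :=
        hlip.trans (mul_le_mul_of_nonneg_left hdist L.2)
      rw [hFdef, abs_mul]
      calc |τ (θ + ρ • p.1, ρ * p.2) - τ (θ, ρ)| * |g p|
          ≤ ((L : ℝ) * (ρ * M)) * |g p| :=
            mul_le_mul_of_nonneg_right hτb (abs_nonneg _)
        _ = ((L : ℝ) * M * ρ) * |g p| := by ring
  -- integrability of F
  have hτAESM : AEStronglyMeasurable (fun p : (Fin n → ℝ) × ℝ =>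
      τ (θ + ρ • p.1, ρ * p.2)) (volume.restrict (upperHalf n)) := by
    have hc : ContinuousOn (fun p : (Fin n → ℝ) × ℝ => τ (θ + ρ • p.1, ρ * p.2))
        (upperHalf n) := by
      apply hτ.continuousOn.comp
      · exact (((continuous_const (y := θ)).add ((continuous_const (y := ρ)).smul continuous_fst)).prodMk
          (continuous_const.mul continuous_snd)).continuousOn
      · exact hmaps
    exact hc.aestronglyMeasurable hHmeas
  have hFaesm : AEStronglyMeasurable F (volume.restrict (upperHalf n)) :=
    (hτAESM.sub aestronglyMeasurable_const).mul hgm.aestronglyMeasurable.restrict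
  have hbInt : IntegrableOn (fun p => ((L : ℝ) * M * ρ) * |g p|) (upperHalf n) :=
    hgInt.abs.const_mul _
  have hFint : IntegrableOn F (upperHalf n) := by
    apply Integrable.mono' hbInt hFaesm
    refine (ae_restrict_iff' hHmeas).2 (Filter.Eventually.of_forall fun p hp => ?_)
    simpa [Real.norm_eq_abs] using hbound p hp
  -- decompose the convolution
  have hconv : groupConv τ ψ (θ, ρ) = (∫ p in upperHalf n, F p) + τ (θ, ρ) := by
    have heq : ∀ p : (Fin n → ℝ) × ℝ,
        τ (θ + ρ • p.1, ρ * p.2) * ψ (-(p.2⁻¹ • p.1), p.2⁻¹) * (p.2 ^ (n + 1))⁻¹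
          = F p + τ (θ, ρ) * g p := by
      intro p; simp only [hFdef, hgdef, hιdef]; ring
    rw [groupConv]
    simp only [heq]
    rw [integral_add hFint (hgInt.const_mul _), integral_const_mul]
    rw [show (∫ p in upperHalf n, g p) = 1 from hψnorm, mul_one]
  rw [hconv, add_sub_cancel_right]
  calc |∫ p in upperHalf n, F p| ≤ ∫ p in upperHalf n, |F p| := by
        simpa [Real.norm_eq_abs] using
          norm_integral_le_integral_norm (μ := volume.restrict (upperHalf n)) F
    _ ≤ ∫ p in upperHalf n, ((L : ℝ) * M * ρ) * |g p| :=
        setIntegral_mono_on hFint.abs hbInt hHmeas hbound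
    _ = ((L : ℝ) * M * ρ) * ∫ p in upperHalf n, |g p| := integral_const_mul _ _
    _ = (L : ℝ) * M * (∫ p in upperHalf n, |g p|) * ρ := by ring
end

section
/- Conformal invariance of H: if g̃ = θḡ for a strictly positive C² function θ, then H_{g̃}(ω) = θ^{-2} H_ḡ(ω) and A_{g̃}(ω) = θ^{-2} A_ḡ(ω). -/
noncomputable section

/-- Points of the coordinate chart: `ℝ^m`. -/
abbrev Pt (m : ℕ) := Fin m → ℝ

/-- The partial derivative `∂_i f` of a real-valued function on `ℝ^m`. -/
def pd {m : ℕ} (i : Fin m) (f : Pt m → ℝ) (x : Pt m) : ℝ :=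
  fderiv ℝ f x (Pi.single i 1)

/-- The components `(grad_g ω)^i = Σ_j g^{ij} ∂_j ω` of the gradient, expressed through the
inverse metric `gInv`. -/
def gradv {m : ℕ} (gInv : Pt m → Fin m → Fin m → ℝ) (ω : Pt m → ℝ) (x : Pt m)
    (i : Fin m) : ℝ :=
  ∑ j, gInv x i j * pd j ω x

/-- `|dω|_g² = Σ_{ij} g^{ij} ∂_i ω ∂_j ω`. -/
def normSq {m : ℕ} (gInv : Pt m → Fin m → Fin m → ℝ) (ω : Pt m → ℝ) (x : Pt m) : ℝ :=
  ∑ i, ∑ j, gInv x i j * pd i ω x * pd j ω x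

/-- `√(det g)`. -/
def sqrtDet {m : ℕ} (g : Pt m → Fin m → Fin m → ℝ) (x : Pt m) : ℝ :=
  Real.sqrt (Matrix.det (Matrix.of (g x)))

/-- The divergence `div_g X = (det g)^{-1/2} ∂_i((det g)^{1/2} X^i)` of a vector field. -/
def divg {m : ℕ} (g : Pt m → Fin m → Fin m → ℝ) (X : Pt m → Fin m → ℝ) (x : Pt m) : ℝ :=
  (sqrtDet g x)⁻¹ * ∑ i, pd i (fun y => sqrtDet g y * X y i) x

/-- The Lie derivative `(L_X g)_{ij} = X^k ∂_k g_{ij} + g_{kj} ∂_i X^k + g_{ik} ∂_j X^k`. -/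
def lieg {m : ℕ} (g : Pt m → Fin m → Fin m → ℝ) (X : Pt m → Fin m → ℝ) (x : Pt m)
    (i j : Fin m) : ℝ :=
  ∑ k, (X x k * pd k (fun y => g y i j) x + g x k j * pd i (fun y => X y k) x
    + g x i k * pd j (fun y => X y k) x)

/-- The conformal Killing (Ahlfors) operator on an `m`-dimensional chart:
`(D_g X)_{ij} = (1/2)(L_X g)_{ij} − (1/m)(div_g X) g_{ij}` (here `m = n+1`). -/
def confKilling {m : ℕ} (g : Pt m → Fin m → Fin m → ℝ) (X : Pt m → Fin m → ℝ) (x : Pt m)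
    (i j : Fin m) : ℝ :=
  (1 / 2) * lieg g X x i j - ((m : ℝ))⁻¹ * divg g X x * g x i j

/-- Christoffel symbols `Γ^k_{ij}` of the metric `g` (with inverse `gInv`). -/
def chr {m : ℕ} (g gInv : Pt m → Fin m → Fin m → ℝ) (x : Pt m) (k i j : Fin m) : ℝ :=
  (1 / 2) * ∑ l, gInv x k l *
    (pd i (fun y => g y j l) x + pd j (fun y => g y i l) x - pd l (fun y => g y i j) x)

/-- Riemann curvature `R^l_{ijk} = ∂_i Γ^l_{jk} − ∂_j Γ^l_{ik} + Γ^l_{ip}Γ^p_{jk} −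
Γ^l_{jp}Γ^p_{ik}`. -/
def riemUp {m : ℕ} (g gInv : Pt m → Fin m → Fin m → ℝ) (x : Pt m) (l i j k : Fin m) : ℝ :=
  pd i (fun y => chr g gInv y l j k) x - pd j (fun y => chr g gInv y l i k) x
    + ∑ p, (chr g gInv x l i p * chr g gInv x p j k - chr g gInv x l j p * chr g gInv x p i k)

/-- Ricci curvature `Ric_{jk} = R^i_{ijk}`. -/
def ricci {m : ℕ} (g gInv : Pt m → Fin m → Fin m → ℝ) (x : Pt m) (j k : Fin m) : ℝ :=
  ∑ i, riemUp g gInv x i i j k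

/-- Scalar curvature `R = g^{jk} Ric_{jk}`. -/
def scal {m : ℕ} (g gInv : Pt m → Fin m → Fin m → ℝ) (x : Pt m) : ℝ :=
  ∑ j, ∑ k, gInv x j k * ricci g gInv x j k

/-- Covariant Hessian `(Hess_g f)_{ij} = ∂_i∂_j f − Γ^k_{ij} ∂_k f`. -/
def hessg {m : ℕ} (g gInv : Pt m → Fin m → Fin m → ℝ) (f : Pt m → ℝ) (x : Pt m)
    (i j : Fin m) : ℝ :=
  pd i (fun y => pd j f y) x - ∑ k, chr g gInv x k i j * pd k f x

/-- The Laplacian `Δ_g f = tr_g Hess_g f`. -/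
def lapg {m : ℕ} (g gInv : Pt m → Fin m → Fin m → ℝ) (f : Pt m → ℝ) (x : Pt m) : ℝ :=
  ∑ i, ∑ j, gInv x i j * hessg g gInv f x i j

/-- Lowered Riemann tensor `R_{ijkq} = g_{pq} R^p_{ijk}`. -/
def riemLow {m : ℕ} (g gInv : Pt m → Fin m → Fin m → ℝ) (x : Pt m) (i j k q : Fin m) : ℝ :=
  ∑ p, g x p q * riemUp g gInv x p i j k

/-- The curvature operator as a `(2,2)`-tensor (indices raised with `g`), normalized so that
the hyperbolic metric has `Riem = −Id`. -/
def riem22 {m : ℕ} (g gInv : Pt m → Fin m → Fin m → ℝ) (x : Pt m) (i j k l : Fin m) : ℝ :=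
  -∑ p, ∑ q, gInv x k p * gInv x l q * riemLow g gInv x i j p q

end

noncomputable section
variable {n : ℕ}

/-- `|dω|_g`. -/
def normDf (gInv : Pt (n + 1) → Fin (n + 1) → Fin (n + 1) → ℝ) (ω : Pt (n + 1) → ℝ)
    (y : Pt (n + 1)) : ℝ :=
  Real.sqrt (normSq gInv ω y)

/-- `A_ḡ(ω) = (1/n)|dω|_ḡ^{3−n} div_ḡ(|dω|_ḡ^{n−1} grad_ḡ ω)`. -/
def Aop (g gInv : Pt (n + 1) → Fin (n + 1) → Fin (n + 1) → ℝ) (ω : Pt (n + 1) → ℝ)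
    (x : Pt (n + 1)) : ℝ :=
  ((n : ℝ))⁻¹ * (normDf gInv ω x) ^ ((3 : ℝ) - (n : ℝ))
    * divg g (fun y i => (normDf gInv ω y) ^ ((n : ℝ) - 1) * gradv gInv ω y i) x

/-- `H_ḡ(ω) = |dω|_ḡ⁶ D_ḡ(|dω|_ḡ^{−2} grad_ḡ ω)
      + A_ḡ(ω)(dω ⊗ dω − (1/(n+1))|dω|_ḡ² ḡ)`. -/
def Hten (g gInv : Pt (n + 1) → Fin (n + 1) → Fin (n + 1) → ℝ) (ω : Pt (n + 1) → ℝ)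
    (x : Pt (n + 1)) (i j : Fin (n + 1)) : ℝ :=
  (normDf gInv ω x) ^ 6
      * confKilling g (fun y k => ((normDf gInv ω y) ^ 2)⁻¹ * gradv gInv ω y k) x i j
    + Aop g gInv ω x
      * (pd i ω x * pd j ω x - ((n : ℝ) + 1)⁻¹ * normSq gInv ω x * g x i j)

end

section Helpers
variable {m : ℕ}

lemma pd_mul {f h : Pt m → ℝ} {x : Pt m} (hf : DifferentiableAt ℝ f x)
    (hh : DifferentiableAt ℝ h x) (i : Fin m) :
    pd i (fun y => f y * h y) x = pd i f x * h x + f x * pd i h x := by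
  unfold pd
  rw [fderiv_fun_mul hf hh]
  simp [ContinuousLinearMap.add_apply, ContinuousLinearMap.smul_apply, smul_eq_mul]
  ring

lemma contDiff_pd {f : Pt m → ℝ} (hf : ContDiff ℝ (⊤ : ℕ∞) f) (i : Fin m) :
    ContDiff ℝ (⊤ : ℕ∞) (pd i f) := by
  have h1 : ContDiff ℝ (⊤ : ℕ∞) (fderiv ℝ f) := hf.fderiv_right (mod_cast le_top)
  exact h1.clm_apply contDiff_const

lemma pd_rpow {f : Pt m → ℝ} {x : Pt m} (hf : DifferentiableAt ℝ f x) (hfx : f x ≠ 0)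
    (p : ℝ) (i : Fin m) :
    pd i (fun y => f y ^ p) x = p * f x ^ (p - 1) * pd i f x := by
  unfold pd
  rw [(hf.hasFDerivAt.rpow_const (Or.inl hfx)).fderiv]
  simp [smul_eq_mul]

end Helpers
section Pos
variable {m : ℕ}

lemma normSq_pos (g gInv : Pt m → Fin m → Fin m → ℝ)
    (hInv : ∀ x i j, (∑ k, g x i k * gInv x k j) = if i = j then (1:ℝ) else 0)
    (hposdef : ∀ (x : Pt m) (v : Fin m → ℝ), v ≠ 0 → 0 < ∑ i, ∑ j, g x i j * v i * v j)
    (ω : Pt m → ℝ) (hdω : ∀ x : Pt m, (fun i => pd i ω x) ≠ (0 : Fin m → ℝ))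
    (x : Pt m) : 0 < normSq gInv ω x := by
  classical
  set v : Fin m → ℝ := fun i => pd i ω x with hv
  set A : Matrix (Fin m) (Fin m) ℝ := Matrix.of (g x) with hA
  set B : Matrix (Fin m) (Fin m) ℝ := Matrix.of (gInv x) with hB
  have hAB : A * B = 1 := by
    ext i j
    simp [hA, hB, Matrix.mul_apply, Matrix.one_apply, hInv x i j]
  set w : Fin m → ℝ := B.mulVec v with hw
  have hAw : A.mulVec w = v := by
    rw [hw, Matrix.mulVec_mulVec, hAB, Matrix.one_mulVec]
  have hwne : w ≠ 0 := by
    intro h0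
    apply hdω x
    rw [← hv, ← hAw, h0, Matrix.mulVec_zero]
  have hpos := hposdef x w hwne
  have key : ∑ i, ∑ j, g x i j * w i * w j = normSq gInv ω x := by
    have h1 : ∑ i, ∑ j, g x i j * w i * w j = ∑ i, w i * v i := by
      refine Finset.sum_congr rfl fun i _ => ?_
      have : v i = (A.mulVec w) i := by rw [hAw]
      rw [this]
      simp only [Matrix.mulVec, dotProduct, hA, Matrix.of_apply]
      rw [Finset.mul_sum]
      exact Finset.sum_congr rfl fun j _ => by ring
    have h2 : normSq gInv ω x = ∑ i, v i * w i := by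
      unfold normSq
      refine Finset.sum_congr rfl fun i _ => ?_
      simp only [hw, Matrix.mulVec, dotProduct, hB, Matrix.of_apply]
      rw [Finset.mul_sum]
      exact Finset.sum_congr rfl fun j _ => by ring
    rw [h1, h2]
    exact Finset.sum_congr rfl fun i _ => mul_comm _ _
  rw [← key]; exact hpos

lemma detg_pos (g : Pt m → Fin m → Fin m → ℝ)
    (hsymm : ∀ x i j, g x i j = g x j i)
    (hposdef : ∀ (x : Pt m) (v : Fin m → ℝ), v ≠ 0 → 0 < ∑ i, ∑ j, g x i j * v i * v j)
    (x : Pt m) : 0 < (Matrix.of (g x)).det := by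
  classical
  have hpd : (Matrix.of (g x)).PosDef := by
    refine Matrix.PosDef.of_dotProduct_mulVec_pos ?_ ?_
    · ext i j
      simp [Matrix.conjTranspose, hsymm x i j]
    · intro v hv
      have := hposdef x v hv
      simp only [dotProduct, Matrix.mulVec, RCLike.re_to_real, star_trivial]
      calc (0:ℝ) < ∑ i, ∑ j, g x i j * v i * v j := this
        _ = ∑ i, v i * ∑ j, g x i j * v j := by
            refine Finset.sum_congr rfl fun i _ => ?_
            rw [Finset.mul_sum]; exact Finset.sum_congr rfl fun j _ => by ring
  exact hpd.det_pos

end Pos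
section Smooth
variable {m : ℕ}

lemma contDiff_gradv {gInv : Pt m → Fin m → Fin m → ℝ}
    (hgInvdiff : ∀ i j, ContDiff ℝ (⊤ : ℕ∞) (fun y => gInv y i j))
    {ω : Pt m → ℝ} (hω : ContDiff ℝ (⊤ : ℕ∞) ω) (k : Fin m) :
    ContDiff ℝ (⊤ : ℕ∞) (fun y => gradv gInv ω y k) := by
  unfold gradv
  exact ContDiff.sum fun j _ => (hgInvdiff k j).mul (contDiff_pd hω j)

lemma contDiff_normSq {gInv : Pt m → Fin m → Fin m → ℝ}
    (hgInvdiff : ∀ i j, ContDiff ℝ (⊤ : ℕ∞) (fun y => gInv y i j))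
    {ω : Pt m → ℝ} (hω : ContDiff ℝ (⊤ : ℕ∞) ω) :
    ContDiff ℝ (⊤ : ℕ∞) (normSq gInv ω) := by
  unfold normSq
  exact ContDiff.sum fun i _ => ContDiff.sum fun j _ =>
    ((hgInvdiff i j).mul (contDiff_pd hω i)).mul (contDiff_pd hω j)

lemma contDiff_det {g : Pt m → Fin m → Fin m → ℝ}
    (hgdiff : ∀ i j, ContDiff ℝ (⊤ : ℕ∞) (fun y => g y i j)) :
    ContDiff ℝ (⊤ : ℕ∞) (fun y => (Matrix.of (g y)).det) := by
  classical
  have : (fun y => (Matrix.of (g y)).det)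
      = fun y => ∑ σ : Equiv.Perm (Fin m),
        ((Equiv.Perm.sign σ : ℤ) : ℝ) * ∏ i, g y (σ i) i := by
    funext y
    rw [Matrix.det_apply]
    refine Finset.sum_congr rfl fun σ _ => ?_
    simp [Units.smul_def, zsmul_eq_mul]
  rw [this]
  exact ContDiff.sum fun σ _ => contDiff_const.mul (contDiff_prod fun i _ => hgdiff (σ i) i)

end Smooth
section Scale
variable {n : ℕ}

lemma normSq_scale (gInv : Pt (n+1) → Fin (n+1) → Fin (n+1) → ℝ) (ω θ : Pt (n+1) → ℝ)
    (y : Pt (n+1)) :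
    normSq (fun y a b => (θ y)⁻¹ * gInv y a b) ω y = (θ y)⁻¹ * normSq gInv ω y := by
  unfold normSq
  rw [Finset.mul_sum]
  refine Finset.sum_congr rfl fun i _ => ?_
  rw [Finset.mul_sum]
  exact Finset.sum_congr rfl fun j _ => by ring

lemma gradv_scale (gInv : Pt (n+1) → Fin (n+1) → Fin (n+1) → ℝ) (ω θ : Pt (n+1) → ℝ)
    (y : Pt (n+1)) (k : Fin (n+1)) :
    gradv (fun y a b => (θ y)⁻¹ * gInv y a b) ω y k = (θ y)⁻¹ * gradv gInv ω y k := by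
  unfold gradv
  rw [Finset.mul_sum]
  exact Finset.sum_congr rfl fun j _ => by ring

lemma normDf_scale (gInv : Pt (n+1) → Fin (n+1) → Fin (n+1) → ℝ) (ω θ : Pt (n+1) → ℝ)
    (y : Pt (n+1)) (hθ : 0 < θ y) :
    normDf (fun y a b => (θ y)⁻¹ * gInv y a b) ω y
      = θ y ^ (-(1/2) : ℝ) * normDf gInv ω y := by
  unfold normDf
  rw [normSq_scale, Real.sqrt_mul (inv_nonneg.2 hθ.le), Real.sqrt_inv]
  congr 1
  rw [Real.sqrt_eq_rpow, ← Real.rpow_neg hθ.le]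

lemma sqrtDet_scale (g : Pt (n+1) → Fin (n+1) → Fin (n+1) → ℝ) (θ : Pt (n+1) → ℝ)
    (y : Pt (n+1)) (hθ : 0 ≤ θ y) :
    sqrtDet (fun y a b => θ y * g y a b) y
      = θ y ^ ((((n:ℝ))+1)/2) * sqrtDet g y := by
  unfold sqrtDet
  have h1 : Matrix.of (fun a b => θ y * g y a b) = θ y • Matrix.of (g y) := by
    ext a b; simp [Matrix.smul_apply, smul_eq_mul]
  rw [h1, Matrix.det_smul, Fintype.card_fin,
    Real.sqrt_mul (pow_nonneg hθ _)]
  congr 1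
  rw [Real.sqrt_eq_rpow, ← Real.rpow_natCast (θ y) (n+1), ← Real.rpow_mul hθ]
  congr 1
  push_cast
  ring

end Scale
section AScale
variable {n : ℕ}

lemma normDf_nonneg (gInv : Pt (n+1) → Fin (n+1) → Fin (n+1) → ℝ) (ω : Pt (n+1) → ℝ)
    (y : Pt (n+1)) : 0 ≤ normDf gInv ω y := Real.sqrt_nonneg _

lemma rpow_collect3 {t : ℝ} (ht : 0 < t) (a b c : ℝ) (u v w : ℝ) :
    (t ^ a * u) * ((t ^ b * v) * (t ^ c * w)) = t ^ (a + b + c) * (u * (v * w)) := by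
  rw [Real.rpow_add ht, Real.rpow_add ht]
  ring

lemma integrand_eq (g gInv : Pt (n+1) → Fin (n+1) → Fin (n+1) → ℝ) (ω : Pt (n+1) → ℝ)
    (θ : Pt (n+1) → ℝ) (hθpos : ∀ y, 0 < θ y) (i : Fin (n+1)) :
    (fun y => sqrtDet (fun y a b => θ y * g y a b) y *
        (normDf (fun y a b => (θ y)⁻¹ * gInv y a b) ω y ^ ((n:ℝ) - 1) *
          gradv (fun y a b => (θ y)⁻¹ * gInv y a b) ω y i))
      = fun y => sqrtDet g y * (normDf gInv ω y ^ ((n:ℝ) - 1) * gradv gInv ω y i) := by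
  funext y
  rw [sqrtDet_scale g θ y (hθpos y).le, normDf_scale gInv ω θ y (hθpos y),
    gradv_scale,
    Real.mul_rpow (Real.rpow_nonneg (hθpos y).le _) (normDf_nonneg gInv ω y),
    ← Real.rpow_mul (hθpos y).le,
    ← Real.rpow_neg_one (θ y),
    rpow_collect3 (hθpos y)]
  have hexp : ((((n:ℝ))+1)/2) + (-(1/2) * ((n:ℝ) - 1)) + (-1) = 0 := by ring
  rw [hexp, Real.rpow_zero, one_mul]

lemma Aop_scale (g gInv : Pt (n+1) → Fin (n+1) → Fin (n+1) → ℝ) (ω : Pt (n+1) → ℝ)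
    (θ : Pt (n+1) → ℝ) (hθpos : ∀ y, 0 < θ y) (x : Pt (n+1)) :
    Aop (fun y a b => θ y * g y a b) (fun y a b => (θ y)⁻¹ * gInv y a b) ω x
      = ((θ x) ^ 2)⁻¹ * Aop g gInv ω x := by
  simp only [Aop, divg]
  simp only [integrand_eq g gInv ω θ hθpos]
  rw [normDf_scale gInv ω θ x (hθpos x), sqrtDet_scale g θ x (hθpos x).le,
    Real.mul_rpow (Real.rpow_nonneg (hθpos x).le _) (normDf_nonneg gInv ω x),
    ← Real.rpow_mul (hθpos x).le, mul_inv, ← Real.rpow_neg (hθpos x).le]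
  have h2 : ((θ x) ^ 2)⁻¹ = θ x ^ (-2 : ℝ) := by
    rw [← Real.rpow_natCast (θ x) 2, ← Real.rpow_neg (hθpos x).le]
    norm_num
  rw [h2]
  have hpq : θ x ^ (-(1/2) * ((3:ℝ) - (n:ℝ))) * θ x ^ (-(((n:ℝ) + 1)/2))
      = θ x ^ (-2 : ℝ) := by
    rw [← Real.rpow_add (hθpos x)]
    congr 1
    ring
  set N3 := normDf gInv ω x ^ ((3:ℝ) - (n:ℝ))
  set si := (sqrtDet g x)⁻¹
  set S := ∑ i, pd i (fun y => sqrtDet g y * (normDf gInv ω y ^ ((n:ℝ) - 1) * gradv gInv ω y i)) x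
  linear_combination ((n:ℝ))⁻¹ * N3 * si * S * hpq

end AScale
section HScale
variable {n : ℕ}

lemma lieg_scale (g : Pt (n+1) → Fin (n+1) → Fin (n+1) → ℝ)
    (hgdiff : ∀ i j, ContDiff ℝ (⊤ : ℕ∞) (fun y => g y i j))
    (θ : Pt (n+1) → ℝ) (hθ : ContDiff ℝ (⊤ : ℕ∞) θ)
    (X : Pt (n+1) → Fin (n+1) → ℝ) (x : Pt (n+1)) (i j : Fin (n+1)) :
    lieg (fun y a b => θ y * g y a b) X x i j
      = θ x * lieg g X x i j + (∑ k, X x k * pd k θ x) * g x i j := by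
  unfold lieg
  rw [Finset.mul_sum, Finset.sum_mul, ← Finset.sum_add_distrib]
  refine Finset.sum_congr rfl fun k _ => ?_
  rw [pd_mul ((hθ.differentiable (by simp)).differentiableAt)
    (((hgdiff i j).differentiable (by simp)).differentiableAt) k]
  ring

lemma divg_scale (g : Pt (n+1) → Fin (n+1) → Fin (n+1) → ℝ)
    (hsymm : ∀ x i j, g x i j = g x j i)
    (hposdef : ∀ (x : Pt (n + 1)) (v : Fin (n + 1) → ℝ), v ≠ 0 →
      0 < ∑ i, ∑ j, g x i j * v i * v j)
    (hgdiff : ∀ i j, ContDiff ℝ (⊤ : ℕ∞) (fun y => g y i j))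
    (θ : Pt (n+1) → ℝ) (hθpos : ∀ y, 0 < θ y) (hθ : ContDiff ℝ (⊤ : ℕ∞) θ)
    (X : Pt (n+1) → Fin (n+1) → ℝ) (x : Pt (n+1))
    (hX : ∀ k, DifferentiableAt ℝ (fun y => X y k) x) :
    divg (fun y a b => θ y * g y a b) X x
      = divg g X x + (((n:ℝ)+1)/2) * (θ x)⁻¹ * ∑ i, pd i θ x * X x i := by
  have hsd : ∀ y, 0 < sqrtDet g y := fun y =>
    Real.sqrt_pos.2 (detg_pos g hsymm hposdef y)
  have hsddiff : DifferentiableAt ℝ (sqrtDet g) x := by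
    have : sqrtDet g = fun y => Real.sqrt ((Matrix.of (g y)).det) := rfl
    rw [this]
    exact DifferentiableAt.sqrt
      (((contDiff_det hgdiff).differentiable (by simp)).differentiableAt)
      (ne_of_gt (detg_pos g hsymm hposdef x))
  simp only [divg]
  have h1 : ∀ k : Fin (n+1), (fun y => sqrtDet (fun y a b => θ y * g y a b) y * X y k)
      = fun y => (θ y ^ ((((n:ℝ))+1)/2)) * (sqrtDet g y * X y k) := by
    intro k; funext y
    rw [sqrtDet_scale g θ y (hθpos y).le, mul_assoc]
  simp only [h1]
  have hθd : DifferentiableAt ℝ θ x := (hθ.differentiable (by simp)).differentiableAt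
  have h2 : ∀ k : Fin (n+1),
      pd k (fun y => (θ y ^ ((((n:ℝ))+1)/2)) * (sqrtDet g y * X y k)) x
        = ((((n:ℝ))+1)/2) * θ x ^ (((((n:ℝ))+1)/2) - 1) * pd k θ x
            * (sqrtDet g x * X x k)
          + θ x ^ ((((n:ℝ))+1)/2) * pd k (fun y => sqrtDet g y * X y k) x := by
    intro k
    rw [pd_mul (hθd.rpow_const (Or.inl (ne_of_gt (hθpos x)))) (hsddiff.fun_mul (hX k)) k,
      pd_rpow hθd (ne_of_gt (hθpos x))]
  simp only [h2]
  rw [Finset.sum_add_distrib]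
  have h3 : ∑ k : Fin (n+1), ((((n:ℝ))+1)/2) * θ x ^ (((((n:ℝ))+1)/2) - 1) * pd k θ x
      * (sqrtDet g x * X x k)
      = (((((n:ℝ))+1)/2) * θ x ^ (((((n:ℝ))+1)/2) - 1) * sqrtDet g x)
        * ∑ k, pd k θ x * X x k := by
    rw [Finset.mul_sum]
    exact Finset.sum_congr rfl fun k _ => by ring
  have h4 : ∑ k : Fin (n+1), θ x ^ ((((n:ℝ))+1)/2) * pd k (fun y => sqrtDet g y * X y k) x
      = θ x ^ ((((n:ℝ))+1)/2) * ∑ k, pd k (fun y => sqrtDet g y * X y k) x := by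
    rw [Finset.mul_sum]
  rw [h3, h4, sqrtDet_scale g θ x (hθpos x).le]
  have hm1 : θ x ^ (((((n:ℝ))+1)/2) - 1) = θ x ^ ((((n:ℝ))+1)/2) * (θ x)⁻¹ := by
    rw [show (((((n:ℝ))+1)/2) - 1) = ((((n:ℝ))+1)/2) + (-1) from by ring,
      Real.rpow_add (hθpos x), Real.rpow_neg_one]
  rw [hm1]
  have hT : θ x ^ ((((n:ℝ))+1)/2) ≠ 0 := ne_of_gt (Real.rpow_pos_of_pos (hθpos x) _)
  have hθne : θ x ≠ 0 := ne_of_gt (hθpos x)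
  have hsdne : sqrtDet g x ≠ 0 := ne_of_gt (hsd x)
  field_simp
  ring

end HScale
section CK
variable {n : ℕ}

lemma confKilling_scale (g : Pt (n+1) → Fin (n+1) → Fin (n+1) → ℝ)
    (hsymm : ∀ x i j, g x i j = g x j i)
    (hposdef : ∀ (x : Pt (n + 1)) (v : Fin (n + 1) → ℝ), v ≠ 0 →
      0 < ∑ i, ∑ j, g x i j * v i * v j)
    (hgdiff : ∀ i j, ContDiff ℝ (⊤ : ℕ∞) (fun y => g y i j))
    (θ : Pt (n+1) → ℝ) (hθpos : ∀ y, 0 < θ y) (hθ : ContDiff ℝ (⊤ : ℕ∞) θ)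
    (X : Pt (n+1) → Fin (n+1) → ℝ) (x : Pt (n+1))
    (hX : ∀ k, DifferentiableAt ℝ (fun y => X y k) x) (i j : Fin (n+1)) :
    confKilling (fun y a b => θ y * g y a b) X x i j
      = θ x * confKilling g X x i j := by
  unfold confKilling
  rw [lieg_scale g hgdiff θ hθ X x i j,
    divg_scale g hsymm hposdef hgdiff θ hθpos hθ X x hX]
  have hP : ∑ k, pd k θ x * X x k = ∑ k, X x k * pd k θ x :=
    Finset.sum_congr rfl fun k _ => mul_comm _ _
  rw [hP]
  have hne : ((n:ℝ) + 1) ≠ 0 := by positivity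
  have hθne : θ x ≠ 0 := ne_of_gt (hθpos x)
  push_cast
  field_simp
  ring

end CK

/-- Conformal invariance of `H`: if `g̃ = θḡ` for a strictly positive `C²`
function `θ`, then `H_{g̃}(ω) = θ^{−2} H_ḡ(ω)` and `A_{g̃}(ω) = θ^{−2} A_ḡ(ω)`. -/
theorem Hten_conformal_invariance {n : ℕ} (hn : 1 ≤ n)
    (g gInv : Pt (n + 1) → Fin (n + 1) → Fin (n + 1) → ℝ)
    (hsymm : ∀ x i j, g x i j = g x j i)
    (hInv : ∀ x i j, (∑ k, g x i k * gInv x k j) = if i = j then (1:ℝ) else 0)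
    (hposdef : ∀ (x : Pt (n + 1)) (v : Fin (n + 1) → ℝ), v ≠ 0 →
      0 < ∑ i, ∑ j, g x i j * v i * v j)
    (hgdiff : ∀ i j, ContDiff ℝ (⊤ : ℕ∞) (fun y => g y i j))
    (hgInvdiff : ∀ i j, ContDiff ℝ (⊤ : ℕ∞) (fun y => gInv y i j))
    (ω : Pt (n + 1) → ℝ) (hω : ContDiff ℝ (⊤ : ℕ∞) ω)
    (hdω : ∀ x : Pt (n + 1), (fun i => pd i ω x) ≠ (0 : Fin (n + 1) → ℝ))
    (θ : Pt (n + 1) → ℝ) (hθpos : ∀ x, 0 < θ x) (hθ : ContDiff ℝ (⊤ : ℕ∞) θ) :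
    (∀ (x : Pt (n + 1)) (i j : Fin (n + 1)),
      Hten (fun y a b => θ y * g y a b) (fun y a b => (θ y)⁻¹ * gInv y a b) ω x i j
        = ((θ x) ^ 2)⁻¹ * Hten g gInv ω x i j) ∧
    (∀ x : Pt (n + 1),
      Aop (fun y a b => θ y * g y a b) (fun y a b => (θ y)⁻¹ * gInv y a b) ω x
        = ((θ x) ^ 2)⁻¹ * Aop g gInv ω x) := by
  have hsy : ∀ y, 0 < normSq gInv ω y := normSq_pos g gInv hInv hposdef ω hdω
  refine ⟨?_, fun x => Aop_scale g gInv ω θ hθpos x⟩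
  intro x i j
  have hfield1 : (fun (y : Pt (n+1)) (k : Fin (n+1)) =>
        ((normDf (fun y a b => (θ y)⁻¹ * gInv y a b) ω y) ^ 2)⁻¹ *
          gradv (fun y a b => (θ y)⁻¹ * gInv y a b) ω y k)
      = fun y k => (normSq gInv ω y)⁻¹ * gradv gInv ω y k := by
    funext y k
    have h1 : normDf (fun y a b => (θ y)⁻¹ * gInv y a b) ω y ^ 2
        = (θ y)⁻¹ * normSq gInv ω y := by
      unfold normDf
      rw [normSq_scale,
        Real.sq_sqrt (mul_nonneg (inv_nonneg.2 (hθpos y).le) (hsy y).le)]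
    rw [h1, gradv_scale, mul_inv, inv_inv]
    have hθne : θ y ≠ 0 := ne_of_gt (hθpos y)
    rw [show θ y * (normSq gInv ω y)⁻¹ * ((θ y)⁻¹ * gradv gInv ω y k)
        = (θ y * (θ y)⁻¹) * ((normSq gInv ω y)⁻¹ * gradv gInv ω y k) from by ring,
      mul_inv_cancel₀ hθne, one_mul]
  have hfield2 : (fun (y : Pt (n+1)) (k : Fin (n+1)) =>
        ((normDf gInv ω y) ^ 2)⁻¹ * gradv gInv ω y k)
      = fun y k => (normSq gInv ω y)⁻¹ * gradv gInv ω y k := by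
    funext y k
    rw [show normDf gInv ω y ^ 2 = normSq gInv ω y from Real.sq_sqrt (hsy y).le]
  have hXd : ∀ k : Fin (n+1), DifferentiableAt ℝ
      (fun y => (normSq gInv ω y)⁻¹ * gradv gInv ω y k) x := by
    intro k
    exact (((contDiff_normSq hgInvdiff hω).differentiable (by simp) x).inv
      (ne_of_gt (hsy x))).mul
      (((contDiff_gradv hgInvdiff hω k).differentiable (by simp)) x)
  simp only [Hten]
  rw [hfield1, hfield2,
    confKilling_scale g hsymm hposdef hgdiff θ hθpos hθ _ x hXd i j,
    Aop_scale g gInv ω θ hθpos x,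
    normDf_scale gInv ω θ x (hθpos x), normSq_scale gInv ω θ x,
    mul_pow, ← Real.rpow_natCast (θ x ^ (-(1/2) : ℝ)) 6,
    ← Real.rpow_mul (hθpos x).le]
  norm_num
  have hθne : θ x ≠ 0 := ne_of_gt (hθpos x)
  field_simp
end
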